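/- Let I be a finite nonempty index set, ρ₀ > 0, and a : I → ℝ with a(i) ≥ 0 for all i; assume the set Z := {i ∈ I : a(i) = 0} is nonempty and that a(i₁) > 0 for some i₁ ∈ I. Let x, y : ℕ → I → ℝ satisfy x_n(i) ≥ 2ρ₀ and y_n(i) ≥ 2ρ₀ for all n and i, and let c, c' : I → ℝ be such that x_n(i) − n·a(i) → c(i) and y_n(i) − n·a(i) → c'(i) as n → ∞, for every i ∈ I (note c(i), c'(i) ≥ 2ρ₀ for i ∈ Z). Then the sequence D(x_n, y_n) converges, with limit (1/2)·max(0, max_{i∈Z} log(c'(i)/c(i))) + (1/2)·max(0, max_{i∈Z} log(c(i)/c'(i))). (Abstract form of the proposition that for a positive Dehn twist g and any X, Y in Teichmüller space, d_h^Γ(gⁿX, gⁿY) converges to a constant C_{X,Y} as n → ∞.) -/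

import Mathlib

/-!
Coordinates with nonzero slope `a i` grow like `n · a i` in both sequences, so their ratio
tends to `1` and their log-ratio to `0`; coordinates with zero slope converge to the
intercepts, which are `≥ 2ρ₀ > 0`, so their log-ratio tends to `log (c' i / c i)`.
Since finite maxima are continuous, each half of `D(x_n, y_n)` converges to the maximum of
these limits, which is `max 0 (max_{i ∈ Z} log (c' i / c i))` because some slope is nonzero.
-/

open Filter Topology

/-- The abstract Hilbert distance between two strictly positive vectors:
`D(u,v) = (1/2)·max_i log(v i/u i) + (1/2)·max_i log(u i/v i)`. -/
noncomputable def Dtil {I : Type*} [Fintype I] [Nonempty I] (u v : I → ℝ) : ℝ :=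
  (1 / 2) * (Finset.univ.sup' Finset.univ_nonempty fun i => Real.log (v i / u i)) +
  (1 / 2) * (Finset.univ.sup' Finset.univ_nonempty fun i => Real.log (u i / v i))

lemma tendsto_div_natCast_of_tendsto_sub_mul {z : ℕ → ℝ} {a d : ℝ}
    (h : Tendsto (fun n : ℕ => z n - n * a) atTop (𝓝 d)) :
    Tendsto (fun n : ℕ => z n / n) atTop (𝓝 a) := by
  have hlim : Tendsto (fun n : ℕ => (z n - n * a) / n + a) atTop (𝓝 (0 + a)) :=
    (h.div_atTop tendsto_natCast_atTop_atTop).add tendsto_const_nhds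
  rw [zero_add] at hlim
  refine hlim.congr' ?_
  filter_upwards [eventually_ne_atTop 0] with n hn
  field_simp
  ring

lemma tendsto_div_one_of_tendsto_sub_mul {x y : ℕ → ℝ} {a c c' : ℝ} (ha : a ≠ 0)
    (hx : Tendsto (fun n : ℕ => x n - n * a) atTop (𝓝 c))
    (hy : Tendsto (fun n : ℕ => y n - n * a) atTop (𝓝 c')) :
    Tendsto (fun n => y n / x n) atTop (𝓝 1) := by
  have hratio : Tendsto (fun n : ℕ => (y n / n) / (x n / n)) atTop (𝓝 (a / a)) :=
    (tendsto_div_natCast_of_tendsto_sub_mul hy).div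
      (tendsto_div_natCast_of_tendsto_sub_mul hx) ha
  rw [div_self ha] at hratio
  refine hratio.congr' ?_
  filter_upwards [eventually_ne_atTop 0] with n hn
  exact div_div_div_cancel_right₀ (Nat.cast_ne_zero.mpr hn) _ _

lemma Finset.sup'_univ_ite_eq_max {I α : Type*} [Fintype I] [Nonempty I] [DecidableEq I] [LinearOrder α]
    (Z : Finset I) (hZ : Z.Nonempty) (hZc : ∃ i, i ∉ Z) (f : I → α) (b : α) :
    univ.sup' univ_nonempty (fun i => if i ∈ Z then f i else b) = max b (Z.sup' hZ f) := by
  apply le_antisymm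
  · refine sup'_le _ _ fun i _ => ?_
    split_ifs with hi
    · exact le_max_of_le_right (le_sup' f hi)
    · exact le_max_left _ _
  · obtain ⟨i₀, hi₀⟩ := hZc
    refine max_le ?_ (sup'_le _ _ fun i hi => ?_)
    · exact le_sup'_of_le _ (mem_univ i₀) (by simp [hi₀])
    · exact le_sup'_of_le _ (mem_univ i) (by simp [hi])

theorem tendsto_sup'_log_div {I : Type*} [Fintype I] [Nonempty I]
    (m : ℝ) (hm : 0 < m) (a : I → ℝ)
    (Z : Finset I) (hZdef : ∀ i : I, i ∈ Z ↔ a i = 0) (hZ : Z.Nonempty)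
    (hpos : ∃ i₁ : I, a i₁ ≠ 0)
    (x y : ℕ → I → ℝ) (hx : ∀ n i, m ≤ x n i) (hy : ∀ n i, m ≤ y n i)
    (c c' : I → ℝ)
    (hc : ∀ i, Tendsto (fun n : ℕ => x n i - n * a i) atTop (𝓝 (c i)))
    (hc' : ∀ i, Tendsto (fun n : ℕ => y n i - n * a i) atTop (𝓝 (c' i))) :
    Tendsto (fun n : ℕ => Finset.univ.sup' Finset.univ_nonempty
      fun i => Real.log (y n i / x n i)) atTop
      (𝓝 (max 0 (Z.sup' hZ fun i => Real.log (c' i / c i)))) := by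
  classical
  have hlog : ∀ i, Tendsto (fun n : ℕ => Real.log (y n i / x n i)) atTop
      (𝓝 (if i ∈ Z then Real.log (c' i / c i) else 0)) := by
    intro i
    by_cases hi : i ∈ Z
    · have hai := (hZdef i).1 hi
      have hxi : Tendsto (fun n : ℕ => x n i) atTop (𝓝 (c i)) := by simpa [hai] using hc i
      have hyi : Tendsto (fun n : ℕ => y n i) atTop (𝓝 (c' i)) := by simpa [hai] using hc' i
      have hci : 0 < c i := hm.trans_le (ge_of_tendsto' hxi fun n => hx n i)
      have hc'i : 0 < c' i := hm.trans_le (ge_of_tendsto' hyi fun n => hy n i)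
      simpa [hi] using (hyi.div hxi hci.ne').log (div_pos hc'i hci).ne'
    · have hai : a i ≠ 0 := mt (hZdef i).2 hi
      simpa [hi] using (tendsto_div_one_of_tendsto_sub_mul hai (hc i) (hc' i)).log one_ne_zero
  have hZc : ∃ i, i ∉ Z := by
    obtain ⟨i₁, hi₁⟩ := hpos
    exact ⟨i₁, mt (hZdef i₁).1 hi₁⟩
  rw [← Finset.sup'_univ_ite_eq_max Z hZ hZc]
  exact Tendsto.finset_sup'_nhds_apply Finset.univ_nonempty fun i _ => hlog i

theorem stmt17_general {I : Type*} [Fintype I] [Nonempty I]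
    (ρ₀ : ℝ) (hρ₀ : 0 < ρ₀)
    (a : I → ℝ)
    (Z : Finset I) (hZdef : ∀ i : I, i ∈ Z ↔ a i = 0) (hZ : Z.Nonempty)
    (hpos : ∃ i₁ : I, 0 < a i₁)
    (x y : ℕ → I → ℝ)
    (hx : ∀ n i, 2 * ρ₀ ≤ x n i) (hy : ∀ n i, 2 * ρ₀ ≤ y n i)
    (c c' : I → ℝ)
    (hc : ∀ i, Tendsto (fun n : ℕ => x n i - n * a i) atTop (nhds (c i)))
    (hc' : ∀ i, Tendsto (fun n : ℕ => y n i - n * a i) atTop (nhds (c' i))) :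
    Tendsto (fun n : ℕ => Dtil (x n) (y n)) atTop
      (nhds ((1 / 2) * max 0 (Z.sup' hZ fun i => Real.log (c' i / c i)) +
        (1 / 2) * max 0 (Z.sup' hZ fun i => Real.log (c i / c' i)))) := by
  have h2ρ₀ : 0 < 2 * ρ₀ := by positivity
  have hne : ∃ i₁ : I, a i₁ ≠ 0 := hpos.imp fun _ h => h.ne'
  have hxy := tendsto_sup'_log_div _ h2ρ₀ a Z hZdef hZ hne x y hx hy c c' hc hc'
  have hyx := tendsto_sup'_log_div _ h2ρ₀ a Z hZdef hZ hne y x hy hx c' c hc' hc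
  simpa only [Dtil] using (hxy.const_mul (1 / 2 : ℝ)).add (hyx.const_mul (1 / 2 : ℝ))

/-- Abstract form of the proposition that for a positive Dehn twist `g`,
`d_h^Γ(gⁿX, gⁿY)` converges as `n → ∞`: if `x_n(i), y_n(i) ≥ 2ρ₀` grow linearly with
common slopes `a(i) ≥ 0` and asymptotic intercepts `c(i), c'(i)`, and the zero set
`Z = {i : a(i) = 0}` is nonempty while some `a(i₁) > 0`, then `D(x_n, y_n)` converges
to `(1/2)·max(0, max_{i∈Z} log(c'(i)/c(i))) + (1/2)·max(0, max_{i∈Z} log(c(i)/c'(i)))`. -/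
theorem stmt17 {I : Type*} [Fintype I] [Nonempty I]
    (ρ₀ : ℝ) (hρ₀ : 0 < ρ₀)
    (a : I → ℝ) (ha : ∀ i, 0 ≤ a i)
    (Z : Finset I) (hZdef : ∀ i : I, i ∈ Z ↔ a i = 0) (hZ : Z.Nonempty)
    (hpos : ∃ i₁ : I, 0 < a i₁)
    (x y : ℕ → I → ℝ)
    (hx : ∀ n i, 2 * ρ₀ ≤ x n i) (hy : ∀ n i, 2 * ρ₀ ≤ y n i)
    (c c' : I → ℝ)
    (hc : ∀ i, Tendsto (fun n : ℕ => x n i - n * a i) atTop (nhds (c i)))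
    (hc' : ∀ i, Tendsto (fun n : ℕ => y n i - n * a i) atTop (nhds (c' i))) :
    Tendsto (fun n : ℕ => Dtil (x n) (y n)) atTop
      (nhds ((1 / 2) * max 0 (Z.sup' hZ fun i => Real.log (c' i / c i)) +
        (1 / 2) * max 0 (Z.sup' hZ fun i => Real.log (c i / c' i)))) :=
  stmt17_general ρ₀ hρ₀ a Z hZdef hZ hpos x y hx hy c c' hc hc'
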